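/- arXiv:1907.04753 — 2 statements merged into one kernel-verified Lean document; each statement's English description precedes it below -/
import Mathlib

section
/- For every finitely supported function f : ℤ → ℂ, every integer N ≥ 2 and every x ∈ ℤ, one has |𝒜_N f(x)| ≤ sup_{N' ≥ 2} |ℳ_{N'} f(x)|. -/
open scoped BigOperators

/-- The set of primes `p ≤ N`. -/
def primesUpTo (N : ℕ) : Finset ℕ := (Finset.range (N + 1)).filter Nat.Prime

/-- `ϑ(N) = Σ_{p ∈ ℙ_N} log p`. -/
noncomputable def theta (N : ℕ) : ℝ := ∑ p ∈ primesUpTo N, Real.log p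

/-- The average along the primes `𝒜_N f(x) = (1/π(N)) Σ_{p ∈ ℙ_N} f(x + p)`. -/
noncomputable def primeAvg (f : ℤ → ℂ) (N : ℕ) (x : ℤ) : ℂ :=
  (((primesUpTo N).card : ℂ))⁻¹ * ∑ p ∈ primesUpTo N, f (x + p)

/-- The weighted average `ℳ_N f(x) = (1/ϑ(N)) Σ_{p ∈ ℙ_N} f(x + p) log p`. -/
noncomputable def weightedPrimeAvg (f : ℤ → ℂ) (N : ℕ) (x : ℤ) : ℂ :=
  ((theta N : ℂ))⁻¹ * ∑ p ∈ primesUpTo N, f (x + p) * (Real.log p : ℂ)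

lemma mem_primesUpTo {p N : ℕ} : p ∈ primesUpTo N ↔ p.Prime ∧ p ≤ N := by
  simp [primesUpTo, Nat.lt_succ_iff, and_comm]

lemma tele (g : ℕ → ℝ) {p N : ℕ} (h : p ≤ N) :
    ∑ M ∈ Finset.Ico p N, (g M - g (M + 1)) = g p - g N := by
  induction N, h using Nat.le_induction with
  | base => simp
  | succ n hn ih => rw [Finset.sum_Ico_succ_top hn, ih]; ring

lemma swap_lemma {A : Type*} [AddCommGroup A] [Module ℝ A] (c : ℕ → A) (g : ℕ → ℝ) (N : ℕ) :
    ∑ p ∈ primesUpTo N, (g p - g N) • c p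
      = ∑ M ∈ Finset.Icc 2 (N - 1), (g M - g (M + 1)) • ∑ p ∈ primesUpTo M, c p := by
  have key : ∀ p M : ℕ, p ∈ primesUpTo N ∧ M ∈ Finset.Ico p N ↔
      p ∈ primesUpTo M ∧ M ∈ Finset.Icc 2 (N - 1) := by
    intro p M
    simp only [mem_primesUpTo, Finset.mem_Ico, Finset.mem_Icc]
    constructor
    · rintro ⟨⟨hp, hpN⟩, hpM, hMN⟩
      exact ⟨⟨hp, hpM⟩, le_trans hp.two_le hpM, Nat.le_sub_one_of_lt hMN⟩
    · rintro ⟨⟨hp, hpM⟩, h2M, hMN⟩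
      have hMN' : M < N := lt_of_le_of_lt hMN (Nat.sub_lt (by omega) one_pos)
      exact ⟨⟨hp, le_of_lt (lt_of_le_of_lt hpM hMN')⟩, hpM, hMN'⟩
  calc ∑ p ∈ primesUpTo N, (g p - g N) • c p
      = ∑ p ∈ primesUpTo N, ∑ M ∈ Finset.Ico p N, (g M - g (M + 1)) • c p := by
        refine Finset.sum_congr rfl fun p hp => ?_
        rw [← Finset.sum_smul, tele g ((mem_primesUpTo.mp hp).2)]
    _ = ∑ M ∈ Finset.Icc 2 (N - 1), ∑ p ∈ primesUpTo M, (g M - g (M + 1)) • c p :=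
        Finset.sum_comm' (fun p M => key p M)
    _ = _ := by simp [Finset.smul_sum]

lemma log_prime_pos {p : ℕ} (hp : p.Prime) : 0 < Real.log p :=
  Real.log_pos (by exact_mod_cast hp.one_lt)

lemma theta_pos {M : ℕ} (hM : 2 ≤ M) : 0 < theta M := by
  refine Finset.sum_pos' (fun p hp => (log_prime_pos (mem_primesUpTo.mp hp).1).le) ?_
  exact ⟨2, mem_primesUpTo.mpr ⟨Nat.prime_two, hM⟩, log_prime_pos Nat.prime_two⟩

/-- For finitely supported `f : ℤ → ℂ`, the averages along the primes are dominated by the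
maximal function of the weighted averages: `|𝒜_N f(x)| ≤ sup_{N' ≥ 2} |ℳ_{N'} f(x)|`. -/
theorem stmt_6 (f : ℤ → ℂ) (hf : (Function.support f).Finite) (N : ℕ) (hN : 2 ≤ N) (x : ℤ) :
    ‖primeAvg f N x‖ ≤ ⨆ (N' : ℕ) (_ : 2 ≤ N'), ‖weightedPrimeAvg f N' x‖ := by
  classical
  set C : ℝ := ⨆ (N' : ℕ) (_ : 2 ≤ N'), ‖weightedPrimeAvg f N' x‖ with hCdef
  set B : ℝ := ∑ y ∈ hf.toFinset, ‖f y‖ with hBdef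
  have hB0 : 0 ≤ B := Finset.sum_nonneg fun _ _ => norm_nonneg _
  have hB : ∀ y : ℤ, ‖f y‖ ≤ B := by
    intro y
    by_cases hy : f y = 0
    · simp [hy, hB0]
    · exact Finset.single_le_sum (f := fun y => ‖f y‖) (fun _ _ => norm_nonneg _)
        (hf.mem_toFinset.mpr hy)
  have hwpa : ∀ M : ℕ, 2 ≤ M → ‖weightedPrimeAvg f M x‖ ≤ B := by
    intro M hM
    have hθ := theta_pos hM
    rw [weightedPrimeAvg, norm_mul, norm_inv, Complex.norm_real, Real.norm_of_nonneg hθ.le]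
    rw [inv_mul_le_iff₀ hθ]
    calc ‖∑ p ∈ primesUpTo M, f (x + p) * (Real.log p : ℂ)‖
        ≤ ∑ p ∈ primesUpTo M, ‖f (x + p) * (Real.log p : ℂ)‖ := norm_sum_le _ _
      _ ≤ ∑ p ∈ primesUpTo M, B * Real.log p := by
          refine Finset.sum_le_sum fun p hp => ?_
          rw [norm_mul, Complex.norm_real,
            Real.norm_of_nonneg (log_prime_pos (mem_primesUpTo.mp hp).1).le]
          exact mul_le_mul_of_nonneg_right (hB _) (log_prime_pos (mem_primesUpTo.mp hp).1).le
      _ = theta M * B := by rw [mul_comm, theta, Finset.mul_sum]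
  have hbdd : BddAbove (Set.range fun N' : ℕ => ⨆ (_ : 2 ≤ N'), ‖weightedPrimeAvg f N' x‖) := by
    refine ⟨max B 0, ?_⟩
    rintro _ ⟨N', rfl⟩
    by_cases h2 : 2 ≤ N'
    · simp only [ciSup_pos h2]
      exact le_max_of_le_left (hwpa N' h2)
    · have : IsEmpty (2 ≤ N') := ⟨h2⟩
      simp only [Real.iSup_of_isEmpty]
      exact le_max_right _ _
  have hC : ∀ M : ℕ, 2 ≤ M → ‖weightedPrimeAvg f M x‖ ≤ C := by
    intro M hM
    have h' := le_ciSup hbdd M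
    simpa only [ciSup_pos hM] using h'
  have hC0 : 0 ≤ C := le_trans (norm_nonneg _) (hC 2 le_rfl)
  -- S M
  set S : ℕ → ℂ := fun M => ∑ p ∈ primesUpTo M, f (x + p) * (Real.log p : ℂ) with hSdef
  have hS : ∀ M : ℕ, 2 ≤ M → ‖S M‖ ≤ C * theta M := by
    intro M hM
    have hθ := theta_pos hM
    have hSM : S M = (theta M : ℂ) * weightedPrimeAvg f M x := by
      rw [weightedPrimeAvg, ← mul_assoc, mul_inv_cancel₀ (by exact_mod_cast hθ.ne'), one_mul]
    rw [hSM, norm_mul, Complex.norm_real, Real.norm_of_nonneg hθ.le, mul_comm]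
    exact mul_le_mul_of_nonneg_right (hC M hM) hθ.le
  set g : ℕ → ℝ := fun M => (Real.log M)⁻¹ with hgdef
  have hd : ∀ M : ℕ, 2 ≤ M → 0 ≤ g M - g (M + 1) := by
    intro M hM
    have h1 : (0:ℝ) < Real.log M := Real.log_pos (by exact_mod_cast hM)
    have h2 : Real.log M ≤ Real.log (M + 1) := by
      apply Real.log_le_log (by positivity)
      push_cast; linarith
    simpa [hgdef, sub_nonneg] using inv_anti₀ h1 (by exact_mod_cast h2)
  have hgN : 0 ≤ g N := by
    have : (0:ℝ) < Real.log N := Real.log_pos (by exact_mod_cast hN)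
    positivity
  -- decomposition of the unweighted sum
  have app1 : ∑ p ∈ primesUpTo N, f (x + p)
      = ∑ M ∈ Finset.Icc 2 (N - 1), (g M - g (M + 1)) • S M + g N • S N := by
    have h := swap_lemma (fun p => f (x + p) * (Real.log p : ℂ)) g N
    have hterm : ∀ p ∈ primesUpTo N, (g p - g N) • (f (x + p) * (Real.log p : ℂ))
        = f (x + p) - g N • (f (x + p) * (Real.log p : ℂ)) := by
      intro p hp
      have hlog : (Real.log p : ℂ) ≠ 0 := by
        exact_mod_cast (log_prime_pos (mem_primesUpTo.mp hp).1).ne'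
      rw [sub_smul]
      congr 1
      simp only [hgdef, Complex.real_smul, Complex.ofReal_inv]
      rw [mul_comm, mul_assoc, mul_inv_cancel₀ hlog, mul_one]
    rw [Finset.sum_congr rfl hterm, Finset.sum_sub_distrib, ← Finset.smul_sum,
      sub_eq_iff_eq_add] at h
    simp only [hSdef]
    exact h
  -- decomposition of the count
  have app2 : (((primesUpTo N).card : ℝ))
      = ∑ M ∈ Finset.Icc 2 (N - 1), (g M - g (M + 1)) * theta M + g N * theta N := by
    have h := swap_lemma (fun p => Real.log p) g N
    simp only [smul_eq_mul] at h
    have hterm : ∀ p ∈ primesUpTo N, (g p - g N) * Real.log p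
        = 1 - g N * Real.log p := by
      intro p hp
      have hlog : Real.log p ≠ 0 := (log_prime_pos (mem_primesUpTo.mp hp).1).ne'
      rw [sub_mul, hgdef]
      field_simp
    rw [Finset.sum_congr rfl hterm, Finset.sum_sub_distrib, ← Finset.mul_sum,
      sub_eq_iff_eq_add] at h
    simpa [theta] using h
  -- card positive
  have hcard : 0 < ((primesUpTo N).card : ℝ) := by
    have : 2 ∈ primesUpTo N := mem_primesUpTo.mpr ⟨Nat.prime_two, hN⟩
    exact_mod_cast Finset.card_pos.mpr ⟨2, this⟩
  -- main sum bound
  have hmain : ‖∑ p ∈ primesUpTo N, f (x + p)‖ ≤ C * (primesUpTo N).card := by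
    rw [app1]
    calc ‖∑ M ∈ Finset.Icc 2 (N - 1), (g M - g (M + 1)) • S M + g N • S N‖
        ≤ ‖∑ M ∈ Finset.Icc 2 (N - 1), (g M - g (M + 1)) • S M‖ + ‖g N • S N‖ :=
          norm_add_le _ _
      _ ≤ (∑ M ∈ Finset.Icc 2 (N - 1), ‖(g M - g (M + 1)) • S M‖) + ‖g N • S N‖ := by
          gcongr; exact norm_sum_le _ _
      _ ≤ (∑ M ∈ Finset.Icc 2 (N - 1), (g M - g (M + 1)) * (C * theta M))
            + g N * (C * theta N) := by
          refine add_le_add (Finset.sum_le_sum fun M hM => ?_) ?_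
          · have hM2 : 2 ≤ M := (Finset.mem_Icc.mp hM).1
            rw [norm_smul, Real.norm_of_nonneg (hd M hM2)]
            exact mul_le_mul_of_nonneg_left (hS M hM2) (hd M hM2)
          · rw [norm_smul, Real.norm_of_nonneg hgN]
            exact mul_le_mul_of_nonneg_left (hS N hN) hgN
      _ = C * (primesUpTo N).card := by
          rw [app2, mul_add, Finset.mul_sum]
          congr 1
          · exact Finset.sum_congr rfl fun M _ => by ring
          · ring
  -- conclude
  have : ‖primeAvg f N x‖ = (((primesUpTo N).card : ℝ))⁻¹ * ‖∑ p ∈ primesUpTo N, f (x + p)‖ := by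
    rw [primeAvg, norm_mul, norm_inv, Complex.norm_natCast]
  rw [this, inv_mul_le_iff₀ hcard]
  exact hmain.trans (le_of_eq (mul_comm _ _))
end

section
/- There is a constant C > 0 such that for all N ∈ ℕ, all β ∈ [1/2, 1], and all ξ ∈ [−1/2, 1/2] with ξ ≠ 0, one has |M̂_N^β(ξ)| ≤ C (N|ξ|)⁻¹. -/
open scoped BigOperators

/-- The multiplier `M̂_N^β(ξ) = (1/N) Σ_{n=1}^N ((n^β − (n−1)^β)/β) e^{2πi ξ n}`. -/
noncomputable def Mhat (β : ℝ) (N : ℕ) (ξ : ℝ) : ℂ :=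
  ((N : ℂ))⁻¹ * ∑ n ∈ Finset.Icc 1 N,
    (((((n : ℝ) ^ β - ((n : ℝ) - 1) ^ β) / β) : ℝ) : ℂ) *
      Complex.exp (2 * Real.pi * Complex.I * ξ * n)

/-!
The coefficients `((n+1)^β - n^β)/β` are nonnegative and, by concavity of `x ↦ x^β`, decreasing,
with first term `1/β ≤ 2`. Abel summation therefore bounds the sum by `2` times the largest partial
sum of the geometric series in `e(ξ) = e^{2πiξ}`, which is at most `2/|e(ξ) - 1| ≤ 1/(2|ξ|)` by
Jordan's inequality `|sin(πξ)| ≥ 2|ξ|`. Hence one may take `C = 1`.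
-/

open Finset Real

theorem norm_sum_range_smul_le_of_antitone {E : Type*} [SeminormedAddCommGroup E]
    [NormedSpace ℝ E] {f : ℕ → ℝ} {z : ℕ → E} {B : ℝ} (hf : Antitone f) (hf₀ : ∀ n, 0 ≤ f n)
    (hB : ∀ n, ‖∑ i ∈ range n, z i‖ ≤ B) (n : ℕ) :
    ‖∑ i ∈ range n, f i • z i‖ ≤ f 0 * B := by
  have hB₀ : 0 ≤ B := by simpa using hB 0
  rw [sum_range_by_parts]
  calc _ ≤ ‖f (n - 1) • ∑ i ∈ range n, z i‖
        + ‖∑ i ∈ range (n - 1), (f (i + 1) - f i) • ∑ j ∈ range (i + 1), z j‖ := norm_sub_le _ _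
    _ ≤ f (n - 1) * B + ∑ i ∈ range (n - 1), (f i - f (i + 1)) * B := by
        gcongr
        · rw [norm_smul, Real.norm_of_nonneg (hf₀ _)]
          exact mul_le_mul_of_nonneg_left (hB n) (hf₀ _)
        · refine (norm_sum_le _ _).trans (sum_le_sum fun i _ => ?_)
          rw [norm_smul, Real.norm_of_nonpos (sub_nonpos.2 (hf i.le_succ)), neg_sub]
          exact mul_le_mul_of_nonneg_left (hB _) (sub_nonneg.2 (hf i.le_succ))
    _ = f 0 * B := by
        rw [← sum_mul, sum_range_sub', ← add_mul, add_sub_cancel]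

theorem norm_geom_sum_le {𝕜 : Type*} [NormedDivisionRing 𝕜] {z : 𝕜} (hz : ‖z‖ ≤ 1)
    (hz₁ : z ≠ 1) (n : ℕ) : ‖∑ i ∈ range n, z ^ i‖ ≤ 2 / ‖z - 1‖ := by
  rw [geom_sum_eq hz₁, norm_div]
  gcongr
  calc ‖z ^ n - 1‖ ≤ ‖z‖ ^ n + ‖(1 : 𝕜)‖ := by rw [← norm_pow]; exact norm_sub_le _ _
    _ ≤ 2 := by rw [norm_one]; linarith [pow_le_one₀ (norm_nonneg z) hz (n := n)]

theorem ConcaveOn.antitone_nat_sub {f : ℝ → ℝ} (hf : ConcaveOn ℝ (Set.Ici 0) f) :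
    Antitone fun n : ℕ => f (n + 1) - f n := by
  refine antitone_nat_of_succ_le fun n => ?_
  have h := hf.slope_anti_adjacent (x := n) (y := n + 1) (z := n + 1 + 1)
    (Set.mem_Ici.2 n.cast_nonneg) (Set.mem_Ici.2 (by positivity)) (by linarith) (by linarith)
  simpa using h

theorem four_mul_abs_le_norm_exp_two_pi_mul_I_sub_one {ξ : ℝ} (hξ : |ξ| ≤ 1 / 2) :
    4 * |ξ| ≤ ‖Complex.exp (2 * π * Complex.I * ξ) - 1‖ := by
  have hπξ : |π * ξ| ≤ π / 2 := by rw [abs_mul, abs_of_pos pi_pos]; nlinarith [pi_pos]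
  have hsin := mul_abs_le_abs_sin hπξ
  rw [abs_mul, abs_of_pos pi_pos, ← mul_assoc, div_mul_cancel₀ _ pi_ne_zero] at hsin
  rw [show 2 * π * Complex.I * ξ = Complex.I * ((2 * π * ξ : ℝ) : ℂ) by push_cast; ring,
    Complex.norm_exp_I_mul_ofReal_sub_one, show 2 * π * ξ / 2 = π * ξ by ring, norm_mul,
    Real.norm_eq_abs, Real.norm_eq_abs, abs_two]
  linarith

theorem antitone_rpow_succ_sub_div {β : ℝ} (hβ₀ : 0 ≤ β) (hβ₁ : β ≤ 1) :
    Antitone fun n : ℕ => (((n : ℝ) + 1) ^ β - (n : ℝ) ^ β) / β := fun _ _ hmn =>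
  div_le_div_of_nonneg_right ((concaveOn_rpow hβ₀ hβ₁).antitone_nat_sub hmn) hβ₀

theorem rpow_succ_sub_div_nonneg {β : ℝ} (hβ : 0 ≤ β) (n : ℕ) :
    0 ≤ (((n : ℝ) + 1) ^ β - (n : ℝ) ^ β) / β :=
  div_nonneg (sub_nonneg.2 (rpow_le_rpow n.cast_nonneg (by linarith) hβ)) hβ

theorem Mhat_eq_mul_sum_range (β : ℝ) (N : ℕ) (ξ : ℝ) :
    Mhat β N ξ = (N : ℂ)⁻¹ * (Complex.exp (2 * π * Complex.I * ξ) *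
      ∑ i ∈ range N, ((((i : ℝ) + 1) ^ β - (i : ℝ) ^ β) / β) •
        Complex.exp (2 * π * Complex.I * ξ) ^ i) := by
  rw [Mhat, ← Ico_add_one_right_eq_Icc, sum_Ico_eq_sum_range, Nat.add_sub_cancel]
  congr 1
  rw [mul_sum]
  refine sum_congr rfl fun i _ => ?_
  rw [Complex.real_smul, mul_left_comm, ← pow_succ', ← Complex.exp_nat_mul]
  push_cast
  ring_nf

/-- `|M̂_N^β(ξ)| ≤ C (N|ξ|)⁻¹` uniformly in `N ∈ ℕ`, `β ∈ [1/2, 1]` and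
`ξ ∈ [−1/2, 1/2] \ {0}`. -/
theorem stmt_9 :
    ∃ C : ℝ, 0 < C ∧
      ∀ (N : ℕ), 1 ≤ N →
        ∀ (β : ℝ), 1 / 2 ≤ β → β ≤ 1 →
          ∀ (ξ : ℝ), ξ ∈ Set.Icc (-(1 / 2) : ℝ) (1 / 2) → ξ ≠ 0 →
            ‖Mhat β N ξ‖ ≤ C * ((N : ℝ) * |ξ|)⁻¹ := by
  refine ⟨1, one_pos, fun N _ β hβ₁ hβ₂ ξ hξ hξ₀ => ?_⟩
  have he : ‖Complex.exp (2 * π * Complex.I * ξ)‖ = 1 := by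
    rw [show 2 * π * Complex.I * ξ = ((2 * π * ξ : ℝ) : ℂ) * Complex.I by push_cast; ring]
    exact Complex.norm_exp_ofReal_mul_I _
  rw [Mhat_eq_mul_sum_range]
  set e := Complex.exp (2 * π * Complex.I * ξ)
  have hξ_pos : 0 < |ξ| := abs_pos.2 hξ₀
  have he_sub : 4 * |ξ| ≤ ‖e - 1‖ := four_mul_abs_le_norm_exp_two_pi_mul_I_sub_one (abs_le.2 hξ)
  have he_ne : e ≠ 1 := sub_ne_zero.1 (norm_pos_iff.1 (by linarith))
  have hsum := norm_sum_range_smul_le_of_antitone (antitone_rpow_succ_sub_div (by linarith) hβ₂)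
    (rpow_succ_sub_div_nonneg (by linarith)) (norm_geom_sum_le he.le he_ne) N
  rw [Nat.cast_zero, zero_add, one_rpow, zero_rpow (by linarith), sub_zero, one_div] at hsum
  have hβ_inv : β⁻¹ ≤ 2 := by rw [inv_le_comm₀ (by linarith) two_pos]; linarith
  rw [norm_mul, norm_mul, he, one_mul, norm_inv, Complex.norm_natCast]
  calc _ ≤ (N : ℝ)⁻¹ * (β⁻¹ * (2 / ‖e - 1‖)) := by gcongr
    _ ≤ (N : ℝ)⁻¹ * (2 * (2 / (4 * |ξ|))) := by gcongr
    _ = 1 * ((N : ℝ) * |ξ|)⁻¹ := by field_simp; ring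
end
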